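/- Let α be a unit fraction and let F be the class of monotonically nondecreasing functions f : [0, ∞) → [0, ∞) with f(x) ∈ [0, x] for all x ≥ 0. Let a_k = Φ⁻¹(kα/2) for k = 1/α, …, 2/α (so that a_{1/α} = 0). The function f_mm(x) = Σ_{k=1/α}^{2/α} a_{k-1} · 1{a_{k-1} ≤ x < a_k} is, up to modification on a set of Lebesgue measure zero, the unique f ∈ F such that the conditional rejection probability condition 2[Φ(f⁻¹(x)) − Φ(f(x))] = α holds for almost every x ≥ 0, where f⁻¹(y) = inf{x : f(x) ≥ y} is the generalized inverse. -/

import Mathlib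

open MeasureTheory ProbabilityTheory Set Filter Pointwise
open scoped ENNReal NNReal

/-- The standard normal cumulative distribution function Φ. -/
noncomputable def stdPhi (x : ℝ) : ℝ := ((gaussianReal 0 1) (Set.Iic x)).toReal

/-- The inverse Φ⁻¹ of the standard normal CDF. -/
noncomputable def stdPhiInv : ℝ → ℝ := Function.invFun stdPhi

/-- The law of (Z_x, Z_y) ~ N((dx, dy), I₂). -/
noncomputable def gauss2 (dx dy : ℝ) : Measure (ℝ × ℝ) :=
  (gaussianReal dx 1).prod (gaussianReal dy 1)

/-- a_k = Φ⁻¹(k·α/2) where α = 1/N. -/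
noncomputable def aseq (N k : ℕ) : ℝ := stdPhiInv ((k : ℝ) / (2 * N))

/-- The step function f_mm(x) = Σ_{k=N}^{2N} a_{k-1}·1{a_{k-1} ≤ x < a_k}
(with a_{2N} = ∞, so the last indicator is 1{a_{2N-1} ≤ x}). -/
noncomputable def fmm (N : ℕ) (x : ℝ) : ℝ :=
  ∑ k ∈ Finset.Icc N (2 * N), aseq N (k - 1) *
    (if aseq N (k - 1) ≤ x ∧ (k = 2 * N ∨ x < aseq N k) then 1 else 0)

/-- Φ(f⁻¹(y)) where f⁻¹(y) = inf{x : f(x) ≥ y} is the generalized inverse, taking the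
value ∞ (so that Φ(f⁻¹(y)) = 1) when the set is empty. -/
noncomputable def PhiGinv (f : ℝ → ℝ) (y : ℝ) : ℝ :=
  sInf (insert 1 (stdPhi '' {x | y ≤ f x}))

/-- The conditional similarity condition: 2[Φ(f⁻¹(x)) − Φ(f(x))] = α = 1/N for
almost every x ≥ 0. -/
def SimilarCond (N : ℕ) (f : ℝ → ℝ) : Prop :=
  ∀ᵐ x ∂((volume : Measure ℝ).restrict (Set.Ici 0)),
    2 * (PhiGinv f x - stdPhi (f x)) = 1 / (N : ℝ)



instance : NullSingletonClass (gaussianReal 0 1) :=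
  ⟨fun x => gaussianReal_absolutelyContinuous 0 one_ne_zero (measure_singleton x)⟩

lemma gauss_pos {s : Set ℝ} (h : 0 < (volume : Measure ℝ) s) : 0 < gaussianReal 0 1 s := by
  rw [pos_iff_ne_zero] at h ⊢
  intro h0
  exact h (gaussianReal_absolutelyContinuous' 0 one_ne_zero h0)

lemma stdPhi_eq_cdf (x : ℝ) : stdPhi x = cdf (gaussianReal 0 1) x := (cdf_eq_real _ x).symm

lemma monotone_stdPhi : Monotone stdPhi := by
  intro x y h
  rw [stdPhi_eq_cdf, stdPhi_eq_cdf]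
  exact monotone_cdf _ h

lemma stdPhi_strictMono : StrictMono stdPhi := by
  intro x y h
  have h1 : gaussianReal 0 1 (Iic x) < gaussianReal 0 1 (Iic y) := by
    have hpos : 0 < gaussianReal 0 1 (Ioc x y) := by
      apply gauss_pos
      rw [Real.volume_Ioc]
      simp [h]
    have : gaussianReal 0 1 (Iic x) + gaussianReal 0 1 (Ioc x y) = gaussianReal 0 1 (Iic y) := by
      rw [← measure_union (Iic_disjoint_Ioc le_rfl) measurableSet_Ioc, Iic_union_Ioc_eq_Iic h.le]
    rw [← this]
    exact ENNReal.lt_add_right (measure_ne_top _ _) hpos.ne'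
  exact ENNReal.toReal_lt_toReal (measure_ne_top _ _) (measure_ne_top _ _) |>.2 h1

lemma continuous_stdPhi : Continuous stdPhi := by
  have hfun : stdPhi = (cdf (gaussianReal 0 1) : ℝ → ℝ) := funext stdPhi_eq_cdf
  rw [hfun]
  rw [continuous_iff_continuousAt]
  intro x
  rw [(monotone_cdf (gaussianReal 0 1)).continuousAt_iff_leftLim_eq_rightLim]
  rw [StieltjesFunction.rightLim_eq]
  have hms : (cdf (gaussianReal 0 1)).measure {x} = 0 := by
    rw [measure_cdf]; exact measure_singleton x
  rw [StieltjesFunction.measure_singleton] at hms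
  have h1 : cdf (gaussianReal 0 1) x - Function.leftLim (cdf (gaussianReal 0 1)) x ≤ 0 :=
    le_of_not_gt fun hc => by simp [ENNReal.ofReal_eq_zero.not.2 (not_le.2 hc)] at hms
  have h2 := (monotone_cdf (gaussianReal 0 1)).leftLim_le (le_refl x)
  linarith

lemma stdPhi_pos (x : ℝ) : 0 < stdPhi x := by
  apply ENNReal.toReal_pos
  · exact (gauss_pos (by rw [Real.volume_Iic]; simp)).ne'
  · exact measure_ne_top _ _

lemma stdPhi_lt_one (x : ℝ) : stdPhi x < 1 := by
  have h1 : gaussianReal 0 1 (Iic x) < 1 := by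
    have hc : gaussianReal 0 1 (Iic x) + gaussianReal 0 1 (Ioi x) = 1 := by
      rw [← measure_union (Iic_disjoint_Ioi le_rfl) measurableSet_Ioi, Iic_union_Ioi]
      simp
    have hpos : 0 < gaussianReal 0 1 (Ioi x) := gauss_pos (by simp [Real.volume_Ioi])
    calc gaussianReal 0 1 (Iic x) < gaussianReal 0 1 (Iic x) + gaussianReal 0 1 (Ioi x) :=
          ENNReal.lt_add_right (measure_ne_top _ _) hpos.ne'
      _ = 1 := hc
  have := ENNReal.toReal_lt_toReal (measure_ne_top (gaussianReal 0 1) (Iic x)) (by norm_num : (1:ℝ≥0∞) ≠ ⊤) |>.2 h1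
  simpa [stdPhi] using this

lemma stdPhi_zero : stdPhi 0 = 1/2 := by
  have hmap : (gaussianReal 0 1).map (fun x => (-1 : ℝ) * x) = gaussianReal 0 1 := by
    have := gaussianReal_map_const_mul (μ := 0) (v := 1) (-1 : ℝ)
    have h2 : (NNReal.mk ((-1:ℝ)^2) (sq_nonneg _) : ℝ≥0) = 1 := by ext; norm_num
    rw [h2] at this
    simpa using this
  have hsym : gaussianReal 0 1 (Iic 0) = gaussianReal 0 1 (Ici 0) := by
    conv_lhs => rw [← hmap]
    rw [Measure.map_apply (by fun_prop) measurableSet_Iic]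
    congr 1
    ext y
    simp
  have hIci : gaussianReal 0 1 (Ici 0) = gaussianReal 0 1 (Ioi 0) :=
    (measure_congr (Ioi_ae_eq_Ici)).symm
  have hc : gaussianReal 0 1 (Iic 0) + gaussianReal 0 1 (Ioi 0) = 1 := by
    rw [← measure_union (Iic_disjoint_Ioi le_rfl) measurableSet_Ioi, Iic_union_Ioi]
    simp
  have h2 : (2 : ℝ≥0∞) * gaussianReal 0 1 (Iic 0) = 1 := by
    rw [two_mul]
    nth_rewrite 2 [hsym]
    rw [hIci]
    exact hc
  have h3 := congrArg ENNReal.toReal h2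
  rw [ENNReal.toReal_mul] at h3
  simp only [ENNReal.toReal_one] at h3
  unfold stdPhi
  rw [show (2:ℝ≥0∞).toReal = 2 by simp] at h3
  linarith

lemma exists_stdPhi_eq {p : ℝ} (h0 : 0 < p) (h1 : p < 1) : ∃ x, stdPhi x = p := by
  have hBot : Tendsto stdPhi atBot (nhds 0) := by
    rw [funext stdPhi_eq_cdf]; exact tendsto_cdf_atBot _
  have hTop : Tendsto stdPhi atTop (nhds 1) := by
    rw [funext stdPhi_eq_cdf]; exact tendsto_cdf_atTop _
  obtain ⟨a, ha⟩ := (hBot.eventually (Iio_mem_nhds h0)).exists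
  obtain ⟨b, hb⟩ := (hTop.eventually (Ioi_mem_nhds h1)).exists
  have hab : a ≤ b := by
    by_contra hc
    exact absurd (monotone_stdPhi (le_of_not_ge hc)) (not_le.2 (lt_trans ha hb))
  have := intermediate_value_Icc hab continuous_stdPhi.continuousOn
  obtain ⟨x, _, hx⟩ := this ⟨ha.le, hb.le⟩
  exact ⟨x, hx⟩

lemma stdPhi_stdPhiInv {p : ℝ} (h0 : 0 < p) (h1 : p < 1) : stdPhi (stdPhiInv p) = p := by
  obtain ⟨x, hx⟩ := exists_stdPhi_eq h0 h1
  exact Function.invFun_eq ⟨x, hx⟩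

lemma stdPhi_le_iff {x y : ℝ} : stdPhi x ≤ stdPhi y ↔ x ≤ y := stdPhi_strictMono.le_iff_le

lemma stdPhi_lt_iff {x y : ℝ} : stdPhi x < stdPhi y ↔ x < y := stdPhi_strictMono.lt_iff_lt

section Aseq
variable {N : ℕ} (hN : 0 < N)

lemma stdPhi_aseq (hN : 0 < N) {k : ℕ} (h1 : N ≤ k) (h2 : k ≤ 2*N - 1) :
    stdPhi (aseq N k) = (k : ℝ) / (2 * N) := by
  have hNR : (0:ℝ) < N := by exact_mod_cast hN
  have hkR : (N:ℝ) ≤ k := by exact_mod_cast h1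
  have hk2 : k < 2 * N := by omega
  have hk2R : (k:ℝ) < 2 * N := by exact_mod_cast hk2
  apply stdPhi_stdPhiInv
  · have : (0:ℝ) < k := by linarith
    positivity
  · rw [div_lt_one (by positivity)]; exact hk2R

lemma aseq_N_eq (hN : 0 < N) : aseq N N = 0 := by
  apply stdPhi_strictMono.injective
  rw [stdPhi_aseq hN le_rfl (by omega), stdPhi_zero]
  have hNR : (0:ℝ) < N := by exact_mod_cast hN
  field_simp

lemma aseq_nonneg (hN : 0 < N) {k : ℕ} (h1 : N ≤ k) (h2 : k ≤ 2*N - 1) : 0 ≤ aseq N k := by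
  rw [← stdPhi_le_iff, stdPhi_zero, stdPhi_aseq hN h1 h2]
  have hNR : (0:ℝ) < N := by exact_mod_cast hN
  have hkR : (N:ℝ) ≤ k := by exact_mod_cast h1
  rw [le_div_iff₀ (by positivity)]
  linarith

lemma aseq_mono (hN : 0 < N) {j k : ℕ} (h1 : N ≤ j) (hjk : j ≤ k) (h2 : k ≤ 2*N - 1) :
    aseq N j ≤ aseq N k := by
  rw [← stdPhi_le_iff, stdPhi_aseq hN h1 (le_trans hjk h2), stdPhi_aseq hN (le_trans h1 hjk) h2]
  have hNR : (0:ℝ) < N := by exact_mod_cast hN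
  apply div_le_div_of_nonneg_right ?_ (by positivity)
  · exact_mod_cast hjk

lemma aseq_strict_mono (hN : 0 < N) {j k : ℕ} (h1 : N ≤ j) (hjk : j < k) (h2 : k ≤ 2*N - 1) :
    aseq N j < aseq N k := by
  rw [← stdPhi_lt_iff, stdPhi_aseq hN h1 (by omega), stdPhi_aseq hN (by omega) h2]
  have hNR : (0:ℝ) < N := by exact_mod_cast hN
  have hNR2 : (j:ℝ) < k := by exact_mod_cast hjk
  gcongr

end Aseq

section Fmm
variable {N : ℕ}

lemma fmm_eq (hN : 0 < N) {k : ℕ} {x : ℝ} (h1 : N ≤ k) (h2 : k ≤ 2*N-1)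
    (hx1 : aseq N k ≤ x) (hx2 : k = 2*N-1 ∨ x < aseq N (k+1)) : fmm N x = aseq N k := by
  have hx0 : 0 ≤ x := le_trans (aseq_nonneg hN h1 h2) hx1
  unfold fmm
  rw [Finset.sum_eq_single (k+1)]
  · have hcond : aseq N (k+1-1) ≤ x ∧ (k+1 = 2*N ∨ x < aseq N (k+1)) := by
      constructor
      · simpa using hx1
      · rcases hx2 with h | h
        · exact Or.inl (by omega)
        · exact Or.inr h
    rw [if_pos hcond]
    simp
  · intro j hj hne
    rw [Finset.mem_Icc] at hj
    rw [if_neg, mul_zero]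
    rintro ⟨hc1, hc2⟩
    by_cases hjk : j ≤ k
    · have hj2N : j ≠ 2*N := by omega
      rcases hc2 with h | h
      · exact hj2N h
      · have : aseq N j ≤ aseq N k := aseq_mono hN hj.1 hjk h2
        linarith
    · have hj2 : k + 2 ≤ j := by omega
      have hge : aseq N (k+1) ≤ aseq N (j-1) := by
        rcases hx2 with hcase | _
        · exfalso; omega
        · exact aseq_mono hN (by omega) (by omega) (by omega)
      rcases hx2 with hcase | hlt
      · omega
      · linarith
  · intro hnot
    exfalso
    exact hnot (Finset.mem_Icc.2 ⟨by omega, by omega⟩)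

lemma exists_fmm_k (hN : 0 < N) {x : ℝ} (hx : 0 ≤ x) :
    ∃ k, N ≤ k ∧ k ≤ 2*N-1 ∧ aseq N k ≤ x ∧ (k = 2*N-1 ∨ (k < 2*N-1 ∧ x < aseq N (k+1))) := by
  classical
  set s := (Finset.Icc N (2*N-1)).filter (fun j => aseq N j ≤ x) with hs
  have hNs : N ∈ s := by
    rw [hs, Finset.mem_filter, Finset.mem_Icc]
    exact ⟨⟨le_rfl, by omega⟩, by rw [aseq_N_eq hN]; exact hx⟩
  have hne : s.Nonempty := ⟨N, hNs⟩
  set k := s.max' hne with hk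
  have hks : k ∈ s := s.max'_mem hne
  rw [hs, Finset.mem_filter, Finset.mem_Icc] at hks
  refine ⟨k, hks.1.1, hks.1.2, hks.2, ?_⟩
  by_cases hktop : k = 2*N-1
  · exact Or.inl hktop
  · right
    refine ⟨by omega, ?_⟩
    by_contra hcon
    push_neg at hcon
    have hcon : k < 2*N-1 ∧ aseq N (k+1) ≤ x := ⟨by omega, hcon⟩
    have : k + 1 ∈ s := by
      rw [hs, Finset.mem_filter, Finset.mem_Icc]
      exact ⟨⟨by omega, by omega⟩, hcon.2⟩
    have := s.le_max' _ this
    omega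

lemma fmm_mono (hN : 0 < N) : MonotoneOn (fmm N) (Set.Ici 0) := by
  rintro x (hx : 0 ≤ x) y (hy : 0 ≤ y) hxy
  obtain ⟨kx, hkx1, hkx2, hkx3, hkx4⟩ := exists_fmm_k hN hx
  obtain ⟨ky, hky1, hky2, hky3, hky4⟩ := exists_fmm_k hN hy
  rw [fmm_eq hN hkx1 hkx2 hkx3 (hkx4.imp id And.right), fmm_eq hN hky1 hky2 hky3 (hky4.imp id And.right)]
  have hkk : kx ≤ ky := by
    by_contra hcon
    push_neg at hcon
    have hky5 : ky ≠ 2*N-1 := by omega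
    rcases hky4 with h | h
    · exact hky5 h
    · have : aseq N (ky+1) ≤ aseq N kx := aseq_mono hN (by omega) (by omega) hkx2
      linarith [h.2]
  exact aseq_mono hN hkx1 hkk hky2

lemma fmm_mem_Icc (hN : 0 < N) {x : ℝ} (hx : 0 ≤ x) : fmm N x ∈ Set.Icc 0 x := by
  obtain ⟨k, h1, h2, h3, h4⟩ := exists_fmm_k hN hx
  rw [fmm_eq hN h1 h2 h3 (h4.imp id And.right)]
  exact ⟨aseq_nonneg hN h1 h2, h3⟩

lemma fmm_nonpos_of_neg (hN : 0 < N) {t : ℝ} (ht : t < 0) : fmm N t ≤ 0 := by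
  unfold fmm
  apply Finset.sum_nonpos
  intro j hj
  by_cases hc : aseq N (j-1) ≤ t ∧ (j = 2*N ∨ t < aseq N j)
  · rw [if_pos hc, mul_one]
    linarith [hc.1]
  · rw [if_neg hc, mul_zero]

lemma fmm_le_top (hN : 0 < N) (t : ℝ) : fmm N t ≤ aseq N (2*N-1) := by
  rcases lt_or_ge t 0 with ht | ht
  · exact le_trans (fmm_nonpos_of_neg hN ht) (aseq_nonneg hN (by omega) le_rfl)
  · obtain ⟨k, h1, h2, h3, h4⟩ := exists_fmm_k hN ht
    rw [fmm_eq hN h1 h2 h3 (h4.imp id And.right)]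
    exact aseq_mono hN h1 h2 le_rfl

end Fmm

section FmmGinv
variable {N : ℕ}

lemma fmm_S_eq_Ici (hN : 0 < N) {k : ℕ} {x : ℝ} (h1 : N ≤ k) (h2 : k < 2*N-1)
    (hx1 : aseq N k < x) (hx2 : x < aseq N (k+1)) :
    {t : ℝ | x ≤ fmm N t} = Set.Ici (aseq N (k+1)) := by
  have hx0 : 0 < x := lt_of_le_of_lt (aseq_nonneg hN h1 (by omega)) hx1
  ext t
  simp only [Set.mem_setOf_eq, Set.mem_Ici]
  constructor
  · intro ht
    have htpos : 0 ≤ t := by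
      by_contra hcon
      push_neg at hcon
      linarith [fmm_nonpos_of_neg hN hcon]
    obtain ⟨kt, g1, g2, g3, g4⟩ := exists_fmm_k hN htpos
    rw [fmm_eq hN g1 g2 g3 (g4.imp id And.right)] at ht
    have hktk : k < kt := by
      by_contra hcon
      push_neg at hcon
      have : aseq N kt ≤ aseq N k := aseq_mono hN g1 hcon (by omega)
      linarith
    calc aseq N (k+1) ≤ aseq N kt := aseq_mono hN (by omega) (by omega) g2
      _ ≤ t := g3
  · intro ht
    have htpos : 0 ≤ t := le_trans (aseq_nonneg hN (by omega) (by omega)) ht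
    obtain ⟨kt, g1, g2, g3, g4⟩ := exists_fmm_k hN htpos
    rw [fmm_eq hN g1 g2 g3 (g4.imp id And.right)]
    have hktk : k + 1 ≤ kt := by
      by_contra hcon
      push_neg at hcon
      have hkt5 : kt ≠ 2*N-1 := by omega
      rcases g4 with h | h
      · exact hkt5 h
      · have : aseq N (kt+1) ≤ aseq N (k+1) := aseq_mono hN (by omega) (by omega) (by omega)
        linarith [h.2]
    have : aseq N (k+1) ≤ aseq N kt := aseq_mono hN (by omega) hktk g2
    linarith

lemma PhiGinv_fmm_mid (hN : 0 < N) {k : ℕ} {x : ℝ} (h1 : N ≤ k) (h2 : k < 2*N-1)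
    (hx1 : aseq N k < x) (hx2 : x < aseq N (k+1)) :
    PhiGinv (fmm N) x = ((k:ℝ)+1) / (2*N) := by
  unfold PhiGinv
  rw [fmm_S_eq_Ici hN h1 h2 hx1 hx2]
  have hval : stdPhi (aseq N (k+1)) = ((k:ℝ)+1) / (2*N) := by
    rw [stdPhi_aseq hN (by omega) (by omega)]
    push_cast
    ring
  apply IsLeast.csInf_eq
  constructor
  · exact Set.mem_insert_iff.2 (Or.inr ⟨aseq N (k+1), Set.self_mem_Ici, hval⟩)
  · rintro y (rfl | ⟨t, ht, rfl⟩)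
    · rw [← hval]; exact (stdPhi_lt_one _).le
    · rw [← hval]; exact monotone_stdPhi ht

lemma PhiGinv_fmm_top (hN : 0 < N) {x : ℝ} (hx1 : aseq N (2*N-1) < x) :
    PhiGinv (fmm N) x = 1 := by
  unfold PhiGinv
  have hS : {t : ℝ | x ≤ fmm N t} = ∅ := by
    ext t
    simp only [Set.mem_setOf_eq, Set.mem_empty_iff_false, iff_false, not_le]
    exact lt_of_le_of_lt (fmm_le_top hN t) hx1
  rw [hS]
  simp

lemma fmm_SimilarCond_pt (hN : 0 < N) {x : ℝ} (hx : 0 ≤ x)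
    (hk : ∀ j, N ≤ j → j ≤ 2*N-1 → x ≠ aseq N j) :
    2 * (PhiGinv (fmm N) x - stdPhi (fmm N x)) = 1 / (N : ℝ) := by
  obtain ⟨k, h1, h2, h3, h4⟩ := exists_fmm_k hN hx
  have h3' : aseq N k < x := lt_of_le_of_ne h3 (fun h => hk k h1 h2 h.symm)
  rw [fmm_eq hN h1 h2 h3 (h4.imp id And.right), stdPhi_aseq hN h1 h2]
  have hNR : (0:ℝ) < N := by exact_mod_cast hN
  rcases h4 with h | h
  · subst h
    rw [PhiGinv_fmm_top hN h3']
    have : ((2*N-1 : ℕ) : ℝ) = 2*(N:ℝ)-1 := by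
      push_cast [Nat.cast_sub (by omega : 1 ≤ 2*N)]
      ring
    rw [this]
    field_simp
    ring
  · rw [PhiGinv_fmm_mid hN h1 h.1 h3' h.2]
    field_simp
    ring

end FmmGinv

section Uniq
variable {N : ℕ} {f : ℝ → ℝ}

lemma PhiGinv_bddBelow (f : ℝ → ℝ) (x : ℝ) :
    BddBelow (insert 1 (stdPhi '' {s | x ≤ f s})) := by
  refine ⟨0, ?_⟩
  rintro y (rfl | ⟨t, _, rfl⟩)
  · norm_num
  · exact (stdPhi_pos t).le

lemma PhiGinv_le {x s : ℝ} (h : x ≤ f s) : PhiGinv f x ≤ stdPhi s :=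
  csInf_le (PhiGinv_bddBelow f x) (Set.mem_insert_iff.2 (Or.inr ⟨s, h, rfl⟩))

lemma le_PhiGinv {x c : ℝ} (hc1 : c ≤ 1) (h : ∀ s, x ≤ f s → c ≤ stdPhi s) :
    c ≤ PhiGinv f x := by
  apply le_csInf (Set.insert_nonempty _ _)
  rintro y (rfl | ⟨t, ht, rfl⟩)
  · exact hc1
  · exact h t ht

lemma PhiGinv_cond {x : ℝ} (hPx : 2 * (PhiGinv f x - stdPhi (f x)) = 1 / (N:ℝ)) (hN : 0 < N) :
    PhiGinv f x = stdPhi (f x) + 1/(2*(N:ℝ)) := by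
  have hNR : (0:ℝ) < N := by exact_mod_cast hN
  have h2 : (1:ℝ)/N = 2 * (1/(2*N)) := by field_simp
  linarith [hPx, h2]

def CondAt (N : ℕ) (f : ℝ → ℝ) (x : ℝ) : Prop :=
  2 * (PhiGinv f x - stdPhi (f x)) = 1 / (N:ℝ)

lemma exists_cond (hs : ∀ᵐ x ∂((volume : Measure ℝ).restrict (Set.Ici 0)), CondAt N f x)
    {a b : ℝ} (ha : 0 ≤ a) (hab : a < b) :
    ∃ x, a < x ∧ x < b ∧ CondAt N f x := by
  by_contra hcon
  push_neg at hcon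
  have hsub : Set.Ioo a b ⊆ {x | ¬ CondAt N f x} := by
    intro x hx
    exact fun hP => (hcon x hx.1 hx.2) hP
  have h0 : (volume : Measure ℝ).restrict (Set.Ici 0) {x | ¬ CondAt N f x} = 0 := by
    rw [ae_iff] at hs
    exact hs
  have h1 : (volume : Measure ℝ).restrict (Set.Ici 0) (Set.Ioo a b) = 0 :=
    measure_mono_null hsub h0
  rw [Measure.restrict_apply' measurableSet_Ici] at h1
  have : Set.Ioo a b ∩ Set.Ici 0 = Set.Ioo a b := by
    apply Set.inter_eq_self_of_subset_left
    intro y hy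
    exact le_trans ha hy.1.le
  rw [this, Real.volume_Ioo] at h1
  exact absurd h1 (by simp [hab])

lemma uniq_key (hN : 0 < N) (hm : MonotoneOn f (Set.Ici 0))
    (hb : ∀ x : ℝ, 0 ≤ x → f x ∈ Set.Icc 0 x)
    (hs : ∀ᵐ x ∂((volume : Measure ℝ).restrict (Set.Ici 0)), CondAt N f x) :
    ∀ d, d ≤ N - 1 →
      (∀ s, 0 ≤ s → (N + d = 2*N-1 ∨ (N + d < 2*N-1 ∧ s < aseq N (N+d+1))) →
        f s ≤ aseq N (N+d)) ∧
      (∀ s, aseq N (N+d) < s → aseq N (N+d) ≤ f s) := by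
  have hNR : (0:ℝ) < N := by exact_mod_cast hN
  intro d
  induction d with
  | zero =>
    intro _
    simp only [Nat.add_zero]
    constructor
    · intro s hs0 hor
      rw [aseq_N_eq hN]
      by_contra hcon
      push_neg at hcon
      obtain ⟨x, hx1, hx2, hPx⟩ := exists_cond hs le_rfl hcon
      have hA := PhiGinv_cond hPx hN
      have hfx0 : 0 ≤ f x := (hb x hx1.le).1
      have hPhi_fx : (1:ℝ)/2 ≤ stdPhi (f x) := by
        rw [← stdPhi_zero]; exact monotone_stdPhi hfx0
      have hle : PhiGinv f x ≤ stdPhi s := PhiGinv_le hx2.le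
      rcases hor with h | ⟨h1, h2⟩
      · -- N = 2N-1, so N = 1, 1/(2N) = 1/2
        have hN1 : N = 1 := by omega
        rw [hN1] at hA
        have : (1:ℝ) ≤ PhiGinv f x := by
          rw [hA]
          have hcast : (1:ℝ)/(2*((1:ℕ):ℝ)) = 1/2 := by norm_num
          rw [hcast]
          linarith [hPhi_fx]
        linarith [stdPhi_lt_one s, hle, this]
      · have hval : stdPhi (aseq N (N+1)) = ((N:ℝ)+1)/(2*N) := by
          rw [stdPhi_aseq hN (by omega) (by omega)]; push_cast; ring
        have hlt : stdPhi s < ((N:ℝ)+1)/(2*N) := by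
          rw [← hval]; exact stdPhi_strictMono h2
        have : ((N:ℝ)+1)/(2*N) ≤ PhiGinv f x := by
          rw [hA]
          have : ((N:ℝ)+1)/(2*N) = 1/2 + 1/(2*N) := by field_simp
          rw [this]
          linarith [hPhi_fx]
        linarith
    · intro s hs0
      rw [aseq_N_eq hN] at hs0 ⊢
      exact (hb s hs0.le).1
  | succ d ih =>
    intro hd
    obtain ⟨UBk, LBk⟩ := ih (by omega)
    set k := N + d with hkdef
    have hk1 : N ≤ k := by omega
    have hk2 : k + 1 ≤ 2*N - 1 := by omega
    have hstep : aseq N k < aseq N (k+1) := aseq_strict_mono hN hk1 (by omega) hk2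
    have hk0 : 0 ≤ aseq N k := aseq_nonneg hN hk1 (by omega)
    have hEQ : ∀ s, aseq N k < s → s < aseq N (k+1) → f s = aseq N k := by
      intro s hs1 hs2
      refine le_antisymm (UBk s (le_trans hk0 hs1.le) (Or.inr ⟨by omega, hs2⟩)) (LBk s hs1)
    have hLB : ∀ s, aseq N (k+1) < s → aseq N (k+1) ≤ f s := by
      intro s hs1
      by_contra hcon
      push_neg at hcon
      have hc0 : 0 ≤ max (aseq N k) (f s) := le_trans hk0 (le_max_left _ _)
      have hclt : max (aseq N k) (f s) < aseq N (k+1) := max_lt hstep hcon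
      obtain ⟨x, hx1, hx2, hPx⟩ := exists_cond hs hc0 hclt
      have hfx : f x = aseq N k := hEQ x (lt_of_le_of_lt (le_max_left _ _) hx1) hx2
      have hA := PhiGinv_cond hPx hN
      have hval : PhiGinv f x = stdPhi (aseq N (k+1)) := by
        rw [hA, hfx, stdPhi_aseq hN hk1 (by omega), stdPhi_aseq hN (by omega) hk2]
        push_cast
        field_simp
      -- find s' ≤ s with x ≤ f s'
      have hex : ∃ s', s' ≤ s ∧ x ≤ f s' := by
        by_contra hcon2
        push_neg at hcon2
        have : stdPhi s ≤ PhiGinv f x := by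
          apply le_PhiGinv (stdPhi_lt_one s).le
          intro t ht
          have hst : s ≤ t := by
            by_contra hts
            push_neg at hts
            exact absurd ht (not_le.2 (hcon2 t hts.le))
          exact monotone_stdPhi hst
        rw [hval] at this
        have := stdPhi_le_iff.1 this
        linarith
      obtain ⟨s', hs'1, hs'2⟩ := hex
      have hs'0 : 0 ≤ s' := by
        by_contra hcon3
        push_neg at hcon3
        have h1 : PhiGinv f x ≤ stdPhi s' := PhiGinv_le hs'2
        have h2 : stdPhi s' < 1/2 := by
          rw [← stdPhi_zero]; exact stdPhi_strictMono hcon3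
        have h3 : (1:ℝ)/2 < stdPhi (aseq N (k+1)) := by
          rw [stdPhi_aseq hN (by omega) hk2, ← stdPhi_zero, stdPhi_zero]
          rw [lt_div_iff₀ (by positivity)]
          have : (N:ℝ) + 1 ≤ ((k:ℝ)+1) := by
            have : (N:ℝ) ≤ k := by exact_mod_cast hk1
            linarith
          push_cast
          push_cast at this
          linarith
        rw [hval] at h1
        linarith
      have : x ≤ f s := le_trans hs'2 (hm (Set.mem_Ici.2 hs'0) (Set.mem_Ici.2 (le_trans hs'0 hs'1)) hs'1)
      have : f s < f s := lt_of_lt_of_le (lt_of_le_of_lt (le_max_right (aseq N k) (f s)) hx1) this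
      exact lt_irrefl _ this
    refine ⟨?_, hLB⟩
    · intro s hs0 hor
      rw [show N + (d + 1) = k + 1 from by omega] at hor ⊢
      by_contra hcon
      push_neg at hcon
      obtain ⟨x, hx1, hx2, hPx⟩ := exists_cond hs (aseq_nonneg hN (by omega) hk2) hcon
      have hfx : aseq N (k+1) ≤ f x := hLB x hx1
      have hA := PhiGinv_cond hPx hN
      have hge : ((k:ℝ)+2)/(2*N) ≤ PhiGinv f x := by
        rw [hA]
        have h1 : stdPhi (aseq N (k+1)) ≤ stdPhi (f x) := monotone_stdPhi hfx
        rw [stdPhi_aseq hN (by omega) hk2] at h1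
        have : ((k:ℝ)+2)/(2*N) = ((k:ℝ)+1)/(2*N) + 1/(2*N) := by field_simp; ring
        rw [this]
        push_cast at h1
        linarith
      have hle : PhiGinv f x ≤ stdPhi s := PhiGinv_le hx2.le
      rcases hor with h | ⟨h1, h2⟩
      · -- k+1 = 2N-1 : (k+2)/(2N) = 1
        have : ((k:ℝ)+2)/(2*N) = 1 := by
          have hk' : (k:ℝ) = 2*(N:ℝ) - 2 := by
            have : k = 2*N - 2 := by omega
            rw [this]
            push_cast [Nat.cast_sub (by omega : 2 ≤ 2*N)]
            ring
          rw [hk']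
          field_simp
          ring
        linarith [stdPhi_lt_one s]
      · have hlt : stdPhi s < ((k:ℝ)+2)/(2*N) := by
          have h3 := stdPhi_strictMono h2
          rw [stdPhi_aseq hN (by omega) (by omega)] at h3
          push_cast at h3
          rw [show ((k:ℝ)+1+1) = (k:ℝ)+2 from by ring] at h3
          exact h3
        linarith

end Uniq

/-- For unit fraction α = 1/N, f_mm is (up to a Lebesgue-null set) the unique
nondecreasing function f : [0,∞) → [0,∞) with f(x) ∈ [0,x] satisfying the conditional
similarity condition 2[Φ(f⁻¹(x)) − Φ(f(x))] = α for a.e. x ≥ 0. -/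
theorem stmt6 (N : ℕ) (hN : 0 < N) :
    (MonotoneOn (fmm N) (Set.Ici 0) ∧ (∀ x : ℝ, 0 ≤ x → fmm N x ∈ Set.Icc 0 x) ∧
      SimilarCond N (fmm N)) ∧
    (∀ f : ℝ → ℝ, MonotoneOn f (Set.Ici 0) → (∀ x : ℝ, 0 ≤ x → f x ∈ Set.Icc 0 x) →
      SimilarCond N f →
      ∀ᵐ x ∂((volume : Measure ℝ).restrict (Set.Ici 0)), f x = fmm N x) := by
  have hK : (volume : Measure ℝ) (↑((Finset.Icc N (2*N-1)).image (aseq N))) = 0 :=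
    Set.Finite.measure_zero (Finset.finite_toSet _) _
  constructor
  · refine ⟨fmm_mono hN, fun x hx => fmm_mem_Icc hN hx, ?_⟩
    unfold SimilarCond
    rw [ae_iff, Measure.restrict_apply' measurableSet_Ici]
    apply measure_mono_null ?_ hK
    rintro x ⟨hnp, hx0⟩
    simp only [Set.mem_setOf_eq] at hnp
    by_contra hxK
    apply hnp
    apply fmm_SimilarCond_pt hN hx0
    intro j hj1 hj2 heq
    exact hxK (Finset.mem_coe.2 (Finset.mem_image.2 ⟨j, Finset.mem_Icc.2 ⟨hj1, hj2⟩, heq.symm⟩))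
  · intro f hm hb hs
    have hs' : ∀ᵐ x ∂((volume : Measure ℝ).restrict (Set.Ici 0)), CondAt N f x := hs
    have key := uniq_key hN hm hb hs'
    rw [ae_iff, Measure.restrict_apply' measurableSet_Ici]
    apply measure_mono_null ?_ hK
    rintro x ⟨hne, hx0⟩
    simp only [Set.mem_setOf_eq] at hne
    by_contra hxK
    apply hne
    obtain ⟨k, h1, h2, h3, h4⟩ := exists_fmm_k hN hx0
    have h3' : aseq N k < x := by
      apply lt_of_le_of_ne h3
      intro heq
      exact hxK (Finset.mem_coe.2 (Finset.mem_image.2 ⟨k, Finset.mem_Icc.2 ⟨h1, h2⟩, heq⟩))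
    rw [fmm_eq hN h1 h2 h3 (h4.imp id And.right)]
    obtain ⟨UB, LB⟩ := key (k - N) (by omega)
    rw [show N + (k - N) = k from by omega] at UB LB
    exact le_antisymm (UB x hx0 h4) (LB x h3')
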